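/- arXiv:1010.3726 — 3 statements merged into one kernel-verified Lean document; each statement's English description precedes it below -/
import Mathlib

section
/- Let A1, A2, B1, B2 be discrete random variables with joint distribution p(a1,a2,b1,b2) = p(a1,b1)p(a2,b2) (i.e., (A1,B1) is independent of (A2,B2)). Let M1 = f(A1,A2) be a function of (A1,A2) and M2 = g(B1,B2,M1) be a function of (B1,B2,M1). Then the conditional mutual information I(A2; B1 | M1, M2, A1, B2) = 0. -/
open Finset

open Classical in
/-- Probability of an event under a pmf `p` on a finite sample space. -/
noncomputable def pr {Ω : Type*} [Fintype Ω] (p : Ω → ℝ) (E : Ω → Prop) : ℝ :=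
  ∑ ω, if E ω then p ω else 0

/-- Shannon entropy (base 2) of a discrete random variable. -/
noncomputable def entH {Ω α : Type*} [Fintype Ω] [Fintype α] (p : Ω → ℝ) (X : Ω → α) : ℝ :=
  -∑ x, pr p (fun ω => X ω = x) * Real.logb 2 (pr p (fun ω => X ω = x))

/-- Conditional Shannon entropy H(X|Y) (base 2). -/
noncomputable def condH {Ω α β : Type*} [Fintype Ω] [Fintype α] [Fintype β]
    (p : Ω → ℝ) (X : Ω → α) (Y : Ω → β) : ℝ :=
  -∑ x, ∑ y, pr p (fun ω => X ω = x ∧ Y ω = y) *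
      Real.logb 2 (pr p (fun ω => X ω = x ∧ Y ω = y) / pr p (fun ω => Y ω = y))

/-- Mutual information I(X;Y) (base 2). -/
noncomputable def mutI {Ω α β : Type*} [Fintype Ω] [Fintype α] [Fintype β]
    (p : Ω → ℝ) (X : Ω → α) (Y : Ω → β) : ℝ :=
  ∑ x, ∑ y, pr p (fun ω => X ω = x ∧ Y ω = y) *
      Real.logb 2 (pr p (fun ω => X ω = x ∧ Y ω = y) /
        (pr p (fun ω => X ω = x) * pr p (fun ω => Y ω = y)))

/-- Conditional mutual information I(X;Y|Z) (base 2). -/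
noncomputable def condMI {Ω α β γ : Type*} [Fintype Ω] [Fintype α] [Fintype β] [Fintype γ]
    (p : Ω → ℝ) (X : Ω → α) (Y : Ω → β) (Z : Ω → γ) : ℝ :=
  ∑ x, ∑ y, ∑ z,
    pr p (fun ω => X ω = x ∧ Y ω = y ∧ Z ω = z) *
      Real.logb 2
        ((pr p (fun ω => X ω = x ∧ Y ω = y ∧ Z ω = z) * pr p (fun ω => Z ω = z)) /
          (pr p (fun ω => X ω = x ∧ Z ω = z) * pr p (fun ω => Y ω = y ∧ Z ω = z)))

/-!
Given the values `z = (m₁, m₂, a₁, b₂)` of the conditioning variables, the event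
`A2 = x, B1 = y, Z = z` is the event `A1 = a₁, B1 = y, A2 = x, B2 = b₂` intersected with the
deterministic conditions `f a₁ x = m₁` and `g y b₂ m₁ = m₂`. By independence of `(A1, B1)` and
`(A2, B2)` its probability therefore factors as `u x * v y`, and such a factorization for every `z`
forces every summand of `I(X; Y | Z)` to vanish: the marginals become `u x * ∑ v`, `v y * ∑ u`
and `∑ u * ∑ v`, so the argument of each logarithm is `1` (or a `0 / 0` that Lean reads as `0`).
-/

section Pr

variable {Ω : Type*} [Fintype Ω] (p : Ω → ℝ)

lemma pr_congr {E F : Ω → Prop} (h : ∀ ω, E ω ↔ F ω) : pr p E = pr p F := by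
  rw [show E = F from funext fun ω => propext (h ω)]

lemma pr_const_and (c : Prop) [Decidable c] (E : Ω → Prop) :
    pr p (fun ω => c ∧ E ω) = if c then pr p E else 0 := by
  by_cases hc : c
  · rw [if_pos hc]
    exact pr_congr p fun ω => and_iff_right hc
  · simp [pr, hc]

lemma pr_eq_sum_pr_and {β : Type*} [Fintype β] (Y : Ω → β) (E : Ω → Prop) :
    pr p E = ∑ y, pr p (fun ω => E ω ∧ Y ω = y) := by
  classical
  unfold pr
  rw [Finset.sum_comm]
  refine Finset.sum_congr rfl fun ω _ => ?_
  by_cases h : E ω <;> simp [h]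

end Pr

theorem condMI_eq_zero_of_factorization {Ω α β γ : Type*} [Fintype Ω] [Fintype α] [Fintype β]
    [Fintype γ] {p : Ω → ℝ} {X : Ω → α} {Y : Ω → β} {Z : Ω → γ}
    (h : ∀ z, ∃ u : α → ℝ, ∃ v : β → ℝ,
      ∀ x y, pr p (fun ω => X ω = x ∧ Y ω = y ∧ Z ω = z) = u x * v y) :
    condMI p X Y Z = 0 := by
  refine Finset.sum_eq_zero fun x _ => Finset.sum_eq_zero fun y _ =>
    Finset.sum_eq_zero fun z _ => ?_
  obtain ⟨u, v, huv⟩ := h z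
  have hXZ : ∀ x, pr p (fun ω => X ω = x ∧ Z ω = z) = u x * ∑ y, v y := by
    intro x
    rw [pr_eq_sum_pr_and p Y, Finset.mul_sum]
    exact Finset.sum_congr rfl fun y _ => by rw [← huv]; exact pr_congr p fun ω => by tauto
  have hYZ : pr p (fun ω => Y ω = y ∧ Z ω = z) = v y * ∑ x, u x := by
    rw [pr_eq_sum_pr_and p X, Finset.mul_sum]
    exact Finset.sum_congr rfl fun x _ => by
      rw [mul_comm, ← huv]; exact pr_congr p fun ω => by tauto
  have hZ : pr p (fun ω => Z ω = z) = (∑ x, u x) * ∑ y, v y := by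
    rw [pr_eq_sum_pr_and p X, Finset.sum_mul]
    exact Finset.sum_congr rfl fun x _ => by
      rw [← hXZ]; exact pr_congr p fun ω => by tauto
  rw [huv, hXZ, hYZ, hZ, show u x * (∑ y, v y) * (v y * ∑ x, u x) =
    u x * v y * ((∑ x, u x) * ∑ y, v y) by ring, Real.logb, Real.log_div_self, zero_div, mul_zero]

theorem stmt_0_general {Ω α₁ α₂ β₁ β₂ μ₁ μ₂ : Type*} [Fintype Ω] [Fintype α₁] [Fintype α₂]
    [Fintype β₁] [Fintype β₂] [Fintype μ₁] [Fintype μ₂]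
    (p : Ω → ℝ)
    (A1 : Ω → α₁) (A2 : Ω → α₂) (B1 : Ω → β₁) (B2 : Ω → β₂)
    (hindep : ∀ a1 b1 a2 b2,
      pr p (fun ω => A1 ω = a1 ∧ B1 ω = b1 ∧ A2 ω = a2 ∧ B2 ω = b2) =
        pr p (fun ω => A1 ω = a1 ∧ B1 ω = b1) * pr p (fun ω => A2 ω = a2 ∧ B2 ω = b2))
    (f : α₁ → α₂ → μ₁) (g : β₁ → β₂ → μ₁ → μ₂)
    (M1 : Ω → μ₁) (hM1 : ∀ ω, M1 ω = f (A1 ω) (A2 ω))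
    (M2 : Ω → μ₂) (hM2 : ∀ ω, M2 ω = g (B1 ω) (B2 ω) (M1 ω)) :
    condMI p A2 B1 (fun ω => (M1 ω, M2 ω, A1 ω, B2 ω)) = 0 := by
  classical
  refine condMI_eq_zero_of_factorization fun ⟨m1, m2, a1, b2⟩ =>
    ⟨fun x => if f a1 x = m1 then pr p (fun ω => A2 ω = x ∧ B2 ω = b2) else 0,
      fun y => if g y b2 m1 = m2 then pr p (fun ω => A1 ω = a1 ∧ B1 ω = y) else 0,
      fun x y => ?_⟩
  have hevent : ∀ ω, (A2 ω = x ∧ B1 ω = y ∧ (M1 ω, M2 ω, A1 ω, B2 ω) = (m1, m2, a1, b2)) ↔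
      (f a1 x = m1 ∧ g y b2 m1 = m2) ∧ (A1 ω = a1 ∧ B1 ω = y ∧ A2 ω = x ∧ B2 ω = b2) := by
    intro ω
    simp only [Prod.mk.injEq, hM2, hM1]
    constructor
    · rintro ⟨rfl, rfl, hf, hg, rfl, rfl⟩
      exact ⟨⟨hf, hf ▸ hg⟩, rfl, rfl, rfl, rfl⟩
    · rintro ⟨⟨hf, hg⟩, rfl, rfl, rfl, rfl⟩
      exact ⟨rfl, rfl, hf, hf ▸ hg, rfl, rfl⟩
  rw [pr_congr p hevent, pr_const_and, hindep]
  split_ifs <;> simp_all [mul_comm]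

/-- Kaspi's lemma, part 1: if (A1,B1) ⟂ (A2,B2), M1 = f(A1,A2), M2 = g(B1,B2,M1),
then I(A2; B1 | M1, M2, A1, B2) = 0. -/
theorem stmt_0 {Ω α₁ α₂ β₁ β₂ μ₁ μ₂ : Type*} [Fintype Ω] [Fintype α₁] [Fintype α₂]
    [Fintype β₁] [Fintype β₂] [Fintype μ₁] [Fintype μ₂]
    (p : Ω → ℝ) (hp : ∀ ω, 0 ≤ p ω) (hsum : ∑ ω, p ω = 1)
    (A1 : Ω → α₁) (A2 : Ω → α₂) (B1 : Ω → β₁) (B2 : Ω → β₂)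
    (hindep : ∀ a1 b1 a2 b2,
      pr p (fun ω => A1 ω = a1 ∧ B1 ω = b1 ∧ A2 ω = a2 ∧ B2 ω = b2) =
        pr p (fun ω => A1 ω = a1 ∧ B1 ω = b1) * pr p (fun ω => A2 ω = a2 ∧ B2 ω = b2))
    (f : α₁ → α₂ → μ₁) (g : β₁ → β₂ → μ₁ → μ₂)
    (M1 : Ω → μ₁) (hM1 : ∀ ω, M1 ω = f (A1 ω) (A2 ω))
    (M2 : Ω → μ₂) (hM2 : ∀ ω, M2 ω = g (B1 ω) (B2 ω) (M1 ω)) :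
    condMI p A2 B1 (fun ω => (M1 ω, M2 ω, A1 ω, B2 ω)) = 0 :=
  stmt_0_general p A1 A2 B1 B2 hindep f g M1 hM1 M2 hM2
end

section
/- Let A, B, Z be independent real Gaussian random variables with variances \sigma_A^2, \sigma_B^2, \sigma_Z^2 > 0, and set X = A + B + Z, Y = B + Z. Let U' = \alpha A + \beta (B+Z) + W where W is Gaussian with variance \sigma_W^2 > 0, independent of (A,B,Z). Then the conditional variance satisfies Var(X | U', Y) = Var(A | \alpha A + W). -/
/-!
We model jointly Gaussian zero-mean random variables as vectors in a real inner
product space (the L² space of zero-mean variables): the variance of `x` is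
`‖x‖²`, the covariance of `x` and `y` is `⟪x, y⟫`, and independence of jointly
Gaussian zero-mean variables corresponds to orthogonality.  For jointly Gaussian
variables, the MMSE conditional variance `Var(x | S)` equals the squared distance
from `x` to the linear span of `S`, and `E[x | s]` is the orthogonal projection
of `x` onto `s`.
-/

open Real RealInnerProductSpace

/-- MMSE conditional variance of `x` given the (jointly Gaussian, zero-mean)
collection `S`: the squared distance from `x` to the linear span of `S`. -/
noncomputable def condVar {V : Type*} [NormedAddCommGroup V] [InnerProductSpace ℝ V]
    (x : V) (S : Set V) : ℝ :=
  ⨅ y : Submodule.span ℝ S, ‖x - (y : V)‖ ^ 2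

/-!
Write `Y = B + Z` and `u = αA + W`. Then `X = A + Y` and `U' = u + βY`, so the observations
`{U', Y}` span the same space as `{u, Y}`. Since `Y` is orthogonal to both `A` and `u`, the error
of estimating `A + Y` by `a • Y + z` with `z ∈ span {u}` splits as `‖A - z‖² + (1 - a)²‖Y‖²`;
the optimum takes `a = 1`, and what remains is the error of estimating `A` from `u` alone.
-/

namespace condVar

variable {V : Type*} [NormedAddCommGroup V] [InnerProductSpace ℝ V]

theorem le_norm_sub_sq {x y : V} {S : Set V} (hy : y ∈ Submodule.span ℝ S) :
    condVar x S ≤ ‖x - y‖ ^ 2 :=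
  ciInf_le ⟨0, by rintro _ ⟨z, rfl⟩; positivity⟩ (⟨y, hy⟩ : Submodule.span ℝ S)

theorem le_of_forall_le {x : V} {S : Set V} {c : ℝ}
    (h : ∀ y ∈ Submodule.span ℝ S, c ≤ ‖x - y‖ ^ 2) : c ≤ condVar x S :=
  le_ciInf fun y => h y y.2

theorem congr_span {x : V} {S T : Set V} (h : Submodule.span ℝ S = Submodule.span ℝ T) :
    condVar x S = condVar x T := by
  unfold condVar
  rw [h]

theorem pair_add_smul_right (x u y : V) (β : ℝ) :
    condVar x {u + β • y, y} = condVar x {u, y} := by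
  refine congr_span (le_antisymm ?_ ?_) <;> refine Submodule.span_le.2 (Set.pair_subset ?_ ?_)
  · exact Submodule.mem_span_pair.2 ⟨1, β, by simp⟩
  · exact Submodule.subset_span (by simp)
  · exact Submodule.mem_span_pair.2 ⟨1, -β, by simp⟩
  · exact Submodule.subset_span (by simp)

theorem add_insert_of_inner_eq_zero {x y : V} {S : Set V} (hxy : ⟪x, y⟫ = 0)
    (hSy : ∀ s ∈ S, ⟪s, y⟫ = 0) : condVar (x + y) (insert y S) = condVar x S := by
  have hspan : ∀ z ∈ Submodule.span ℝ S, ⟪z, y⟫ = 0 := by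
    simp_rw [← Submodule.mem_orthogonal_singleton_iff_inner_left] at hSy ⊢
    exact Submodule.span_le.2 hSy
  have pythagoras : ∀ (a : ℝ), ∀ z ∈ Submodule.span ℝ S,
      ‖x + y - (a • y + z)‖ ^ 2 = ‖x - z‖ ^ 2 + (1 - a) ^ 2 * ‖y‖ ^ 2 := by
    intro a z hz
    have hsplit : x + y - (a • y + z) = (x - z) + (1 - a) • y := by module
    rw [hsplit, norm_add_sq_real, inner_smul_right, inner_sub_left, hxy, hspan z hz, norm_smul,
      mul_pow, Real.norm_eq_abs, sq_abs]
    ring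
  apply le_antisymm
  · refine le_of_forall_le fun z hz => ?_
    calc condVar (x + y) (insert y S) ≤ ‖x + y - ((1 : ℝ) • y + z)‖ ^ 2 :=
          le_norm_sub_sq (Submodule.mem_span_insert.2 ⟨1, z, hz, rfl⟩)
      _ = ‖x - z‖ ^ 2 := by rw [pythagoras 1 z hz]; ring
  · refine le_of_forall_le fun w hw => ?_
    obtain ⟨a, z, hz, rfl⟩ := Submodule.mem_span_insert.1 hw
    calc condVar x S ≤ ‖x - z‖ ^ 2 := le_norm_sub_sq hz
      _ ≤ ‖x + y - (a • y + z)‖ ^ 2 := by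
          rw [pythagoras a z hz]
          exact le_add_of_nonneg_right (by positivity)

end condVar

theorem stmt_9_general {V : Type*} [NormedAddCommGroup V] [InnerProductSpace ℝ V]
    (A B Z W : V)
    (hAB : ⟪A, B⟫ = 0) (hAZ : ⟪A, Z⟫ = 0)
    (hBW : ⟪B, W⟫ = 0) (hZW : ⟪Z, W⟫ = 0)
    (α β : ℝ) :
    condVar (A + B + Z) {α • A + β • (B + Z) + W, B + Z} =
      condVar A {α • A + W} := by
  have hAY : ⟪A, B + Z⟫ = 0 := by rw [inner_add_right, hAB, hAZ, add_zero]
  have huY : ⟪α • A + W, B + Z⟫ = 0 := by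
    rw [inner_add_left, real_inner_smul_left, hAY, real_inner_comm, inner_add_left, hBW, hZW]
    ring
  have hX : A + B + Z = A + (B + Z) := add_assoc A B Z
  have hU : α • A + β • (B + Z) + W = (α • A + W) + β • (B + Z) := by abel
  rw [hX, hU, condVar.pair_add_smul_right, Set.pair_comm]
  exact condVar.add_insert_of_inner_eq_zero hAY (by rintro s rfl; exact huY)

/-- With A, B, Z, W independent zero-mean Gaussians, X = A+B+Z, Y = B+Z and
U' = αA + β(B+Z) + W, we have Var(X | U', Y) = Var(A | αA + W). -/
theorem stmt_9 {V : Type*} [NormedAddCommGroup V] [InnerProductSpace ℝ V]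
    (A B Z W : V) (σA σB σZ σW : ℝ)
    (hσA : 0 < σA) (hσB : 0 < σB) (hσZ : 0 < σZ) (hσW : 0 < σW)
    (hA : ‖A‖ ^ 2 = σA) (hB : ‖B‖ ^ 2 = σB) (hZ : ‖Z‖ ^ 2 = σZ) (hW : ‖W‖ ^ 2 = σW)
    (hAB : ⟪A, B⟫ = 0) (hAZ : ⟪A, Z⟫ = 0) (hAW : ⟪A, W⟫ = 0)
    (hBZ : ⟪B, Z⟫ = 0) (hBW : ⟪B, W⟫ = 0) (hZW : ⟪Z, W⟫ = 0)
    (α β : ℝ) :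
    condVar (A + B + Z) {α • A + β • (B + Z) + W, B + Z} =
      condVar A {α • A + W} :=
  stmt_9_general A B Z W hAB hAZ hBW hZW α β
end

section
/- Let A, B, Z be independent zero-mean real Gaussian random variables, X = A + B + Z, and let U' = \alpha A + \beta(B+Z) + W with W Gaussian independent of (A,B,Z). Then Var(X | U', Z) = Var(A + B | \alpha A + \beta B + W), where on the right-hand side A, B, W are treated as independent Gaussians with the same variances. -/
/-!
We model jointly Gaussian zero-mean random variables as vectors in a real inner
product space (the L² space of zero-mean variables): the variance of `x` is
`‖x‖²`, the covariance of `x` and `y` is `⟪x, y⟫`, and independence of jointly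
Gaussian zero-mean variables corresponds to orthogonality.  For jointly Gaussian
variables, the MMSE conditional variance `Var(x | S)` equals the squared distance
from `x` to the linear span of `S`, and `E[x | s]` is the orthogonal projection
of `x` onto `s`.
-/

open Real RealInnerProductSpace

/-!
Since `U' = (αA + βB + W) + βZ`, conditioning on `(U', Z)` is conditioning on
`(αA + βB + W, Z)`. The summand `Z` of `X` is then known exactly, and what remains,
`A + B`, is independent of `Z`, as is `αA + βB + W`, so `Z` carries no further
information about it.
-/

theorem Submodule.span_pair_add_smul {R M : Type*} [Ring R] [AddCommGroup M] [Module R M]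
    (x y : M) (c : R) : span R {x + c • y, y} = span R {x, y} := by
  apply le_antisymm <;>
    rw [span_le, Set.insert_subset_iff, Set.singleton_subset_iff] <;>
    refine ⟨?_, subset_span (by simp)⟩
  · exact mem_span_pair.mpr ⟨1, c, by simp⟩
  · exact mem_span_pair.mpr ⟨1, -c, by simp⟩

section condVar

variable {V : Type*} [NormedAddCommGroup V] [InnerProductSpace ℝ V]

theorem bddBelow_range_norm_sub_sq (x : V) (K : Submodule ℝ V) :
    BddBelow (Set.range fun y : K => ‖x - (y : V)‖ ^ 2) :=
  ⟨0, by rintro _ ⟨y, rfl⟩; positivity⟩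

theorem condVar_congr_span {x : V} {S T : Set V}
    (h : Submodule.span ℝ S = Submodule.span ℝ T) : condVar x S = condVar x T := by
  unfold condVar
  rw [h]

theorem condVar_add_of_mem_span {x y : V} {S : Set V} (hy : y ∈ Submodule.span ℝ S) :
    condVar (x + y) S = condVar x S := by
  unfold condVar
  rw [← (Equiv.addRight (⟨y, hy⟩ : Submodule.span ℝ S)).iInf_comp]
  congr! 2 with z
  simp only [Equiv.coe_addRight, Submodule.coe_add]
  abel_nf

theorem condVar_insert_of_inner_eq_zero {x z : V} {S : Set V} (hx : ⟪z, x⟫ = 0)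
    (hS : ∀ s ∈ S, ⟪z, s⟫ = 0) : condVar x (insert z S) = condVar x S := by
  have hperp : Submodule.span ℝ S ≤ (ℝ ∙ z)ᗮ :=
    Submodule.span_le.mpr fun s hs => Submodule.mem_orthogonal_singleton_iff_inner_right.mpr
      (hS s hs)
  unfold condVar
  apply le_antisymm
  · refine le_ciInf fun ⟨y, hy⟩ => ciInf_le_of_le (bddBelow_range_norm_sub_sq _ _)
      ⟨y, Submodule.span_mono (Set.subset_insert z S) hy⟩ le_rfl
  · refine le_ciInf fun ⟨y, hy⟩ => ?_
    obtain ⟨c, s, hs, rfl⟩ := Submodule.mem_span_insert.mp hy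
    have hzs : ⟪z, s⟫ = 0 := Submodule.mem_orthogonal_singleton_iff_inner_right.mp (hperp hs)
    have hpyth : ‖x - (c • z + s)‖ ^ 2 = ‖x - s‖ ^ 2 + ‖c • z‖ ^ 2 := by
      rw [show x - (c • z + s) = (x - s) - c • z by abel, norm_sub_sq_real]
      simp [inner_sub_left, inner_smul_right, real_inner_comm z x, real_inner_comm z s, hx, hzs]
    calc ⨅ y : Submodule.span ℝ S, ‖x - (y : V)‖ ^ 2
        ≤ ‖x - s‖ ^ 2 := ciInf_le_of_le (bddBelow_range_norm_sub_sq _ _) ⟨s, hs⟩ le_rfl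
      _ ≤ ‖x - (c • z + s)‖ ^ 2 := by rw [hpyth]; exact le_add_of_nonneg_right (by positivity)

end condVar

theorem stmt_10_general {V : Type*} [NormedAddCommGroup V] [InnerProductSpace ℝ V]
    (A B Z W : V)
    (hAZ : ⟪A, Z⟫ = 0)
    (hBZ : ⟪B, Z⟫ = 0) (hZW : ⟪Z, W⟫ = 0)
    (α β : ℝ) :
    condVar (A + B + Z) {α • A + β • (B + Z) + W, Z} =
      condVar (A + B) {α • A + β • B + W} := by
  have hU : α • A + β • (B + Z) + W = (α • A + β • B + W) + β • Z := by module
  have hZA : ⟪Z, A⟫ = 0 := by rw [real_inner_comm, hAZ]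
  have hZB : ⟪Z, B⟫ = 0 := by rw [real_inner_comm, hBZ]
  calc condVar (A + B + Z) {α • A + β • (B + Z) + W, Z}
      = condVar (A + B + Z) {Z, α • A + β • B + W} := by
        rw [hU, Set.pair_comm Z]
        exact condVar_congr_span (Submodule.span_pair_add_smul _ _ _)
    _ = condVar (A + B) {Z, α • A + β • B + W} :=
        condVar_add_of_mem_span (Submodule.subset_span (by simp))
    _ = condVar (A + B) {α • A + β • B + W} := by
        refine condVar_insert_of_inner_eq_zero (by simp [inner_add_right, hZA, hZB]) ?_
        simp [inner_add_right, inner_smul_right, hZA, hZB, hZW]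

/-- With A, B, Z, W independent zero-mean Gaussians, X = A+B+Z and
U' = αA + β(B+Z) + W, we have Var(X | U', Z) = Var(A+B | αA + βB + W). -/
theorem stmt_10 {V : Type*} [NormedAddCommGroup V] [InnerProductSpace ℝ V]
    (A B Z W : V) (σA σB σZ σW : ℝ)
    (hσA : 0 < σA) (hσB : 0 < σB) (hσZ : 0 < σZ) (hσW : 0 < σW)
    (hA : ‖A‖ ^ 2 = σA) (hB : ‖B‖ ^ 2 = σB) (hZ : ‖Z‖ ^ 2 = σZ) (hW : ‖W‖ ^ 2 = σW)
    (hAB : ⟪A, B⟫ = 0) (hAZ : ⟪A, Z⟫ = 0) (hAW : ⟪A, W⟫ = 0)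
    (hBZ : ⟪B, Z⟫ = 0) (hBW : ⟪B, W⟫ = 0) (hZW : ⟪Z, W⟫ = 0)
    (α β : ℝ) :
    condVar (A + B + Z) {α • A + β • (B + Z) + W, Z} =
      condVar (A + B) {α • A + β • B + W} :=
  stmt_10_general A B Z W hAZ hBZ hZW α β
end
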